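/- Let X be a metric surface and f : X → ℝ² a continuous map satisfying Lusin's condition (N). Assume that J_f is Borel measurable and that there is a countable set C ⊂ X such that every x ∈ X ∖ C has an open neighborhood on which f is injective. Let F ⊂ X be a Borel set such that H²-almost every x ∈ F is an H²-density point. Then ∫_{ℝ²} N(y, f, F) dy ≤ ∫_F J_f dH². -/

import Mathlib

open MeasureTheory Metric Set Filter
open scoped ENNReal NNReal Topology

/-- The generalized Jacobian `J_f(x) = limsup_{r→0+} m₂(f(B̄(x,r)))/(π r²)`, where `m₂` is
the 2-dimensional Lebesgue (outer) measure on `ℝ²` and `B̄(x,r)` is the closed ball. -/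
noncomputable def jacobianJ {X : Type*} [MetricSpace X]
    (f : X → EuclideanSpace ℝ (Fin 2)) (x : X) : ℝ≥0∞ :=
  Filter.limsup
    (fun r : ℝ => volume (f '' Metric.closedBall x r) / ENNReal.ofReal (Real.pi * r ^ 2))
    (𝓝[>] (0 : ℝ))

/-- The multiplicity function `N(y, f, A)`: the number of preimages of `y` under `f`
lying in `A`, as an extended nonnegative real. -/
noncomputable def multN {X : Type*}
    (f : X → EuclideanSpace ℝ (Fin 2)) (A : Set X) (y : EuclideanSpace ℝ (Fin 2)) : ℝ≥0∞ :=
  ({x ∈ A | f x = y}).encard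

/-- `x` is an `H²`-density point of the metric space `X`:
`H²(B̄(x,r))/(π r²) → 1` as `r → 0+`. -/
def IsH2DensityPoint {X : Type*} [MetricSpace X] [MeasurableSpace X] [BorelSpace X] (x : X) : Prop :=
  Filter.Tendsto
    (fun r : ℝ => μH[2] (Metric.closedBall x r) / ENNReal.ofReal (Real.pi * r ^ 2))
    (𝓝[>] (0 : ℝ)) (𝓝 1)

/-!
Off the countable set `C`, whose image is Lebesgue-null, `X` is covered by countably many
disjoint Borel pieces on which `f` is injective, so `∫ N(y, f, F) dy` is at most the sum of the
areas `m₂(f(F ∩ Wₙ))`. At a density point `x` with `J_f(x) < c`, small balls satisfy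
`m₂(f(B̄(x,r))) ≤ c H²(B̄(x,r))` and `H²` is doubling, so a Vitali covering of a set `A` on which
`J_f < c` gives `m₂(f(A)) ≤ c H²(A)`; the uncovered `H²`-null remainder is handled by
condition (N). Slicing a piece into the level sets `bᵐ ≤ J_f < bᵐ⁺¹` and letting `b → 1` turns
this into `m₂(f(B)) ≤ ∫_B J_f dH²`.
-/

open Function

section Vitali

variable {X Y : Type*} [MetricSpace X] [SecondCountableTopology X] [MeasurableSpace X]
  [BorelSpace X] [MeasurableSpace Y] {μ : Measure X} [IsLocallyFiniteMeasure μ]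
  {ν : Measure Y} {g : X → Y}

theorem measure_image_le_mul_measure_of_subset_isOpen (hN : ∀ E, μ E = 0 → ν (g '' E) = 0)
    {A U : Set X} (hAU : A ⊆ U) (hU : IsOpen U) {c : ℝ≥0∞} (K : ℝ≥0)
    (h : ∀ x ∈ A, ∃ᶠ r in 𝓝[>] 0, μ (closedBall x (3 * r)) ≤ K * μ (closedBall x r) ∧
      ν (g '' closedBall x r) ≤ c * μ (closedBall x r)) :
    ν (g '' A) ≤ c * μ U := by
  set B : X × ℝ → Set X := fun p => closedBall p.1 p.2
  let t : Set (X × ℝ) := {p | p.1 ∈ A ∧ B p ⊆ U ∧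
    μ (closedBall p.1 (3 * p.2)) ≤ K * μ (B p) ∧ ν (g '' B p) ≤ c * μ (B p) ∧ 0 < p.2}
  obtain ⟨u, hut, hu, hud, hnull⟩ := Vitali.exists_disjoint_covering_ae' μ A t K
    (·.2) (·.1) B (fun _ _ => Subset.rfl) (fun _ hp => hp.2.2.1)
    (fun p hp => ⟨p.1, ball_subset_interior_closedBall (mem_ball_self hp.2.2.2.2)⟩)
    (fun _ _ => isClosed_closedBall) fun x hx => by
      obtain ⟨ε, hε, hεU⟩ := Metric.isOpen_iff.1 hU x (hAU hx)
      have hsmall : ∀ᶠ r in 𝓝[>] (0 : ℝ), closedBall x r ⊆ U ∧ 0 < r :=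
        ((eventually_lt_nhds hε).filter_mono nhdsWithin_le_nhds).and self_mem_nhdsWithin
          |>.mono fun r hr => ⟨(closedBall_subset_ball hr.1).trans hεU, hr.2⟩
      exact ((h x hx).and_eventually hsmall).mono fun r hr =>
        ⟨(x, r), ⟨hx, hr.2.1, hr.1.1, hr.1.2, hr.2.2⟩, rfl, rfl⟩
  set W := ⋃ p ∈ u, B p
  calc ν (g '' A) ≤ ν (g '' (A \ W) ∪ ⋃ p ∈ u, g '' B p) := by
        rw [← image_iUnion₂, ← image_union]
        exact measure_mono (image_mono (subset_sdiff_union A W))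
  _ ≤ ν (g '' (A \ W)) + ∑' p : u, ν (g '' B p) :=
        (measure_union_le _ _).trans (add_le_add_right (measure_biUnion_le ν hu _) _)
  _ ≤ 0 + ∑' p : u, c * μ (B p) := by
        gcongr with p
        · exact (hN _ hnull).le
        · exact (hut p.2).2.2.2.1
  _ = c * μ W := by
        rw [zero_add, ENNReal.tsum_mul_left,
          measure_biUnion hu hud fun _ _ => measurableSet_closedBall]
  _ ≤ c * μ U := by
        gcongr
        exact iUnion₂_subset fun p hp => (hut hp).2.1

theorem measure_image_le_mul_of_frequently (hN : ∀ E, μ E = 0 → ν (g '' E) = 0)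
    {A : Set X} {c : ℝ≥0∞} (hc : c ≠ ∞) (K : ℝ≥0)
    (h : ∀ x ∈ A, ∃ᶠ r in 𝓝[>] 0, μ (closedBall x (3 * r)) ≤ K * μ (closedBall x r) ∧
      ν (g '' closedBall x r) ≤ c * μ (closedBall x r)) :
    ν (g '' A) ≤ c * μ A := by
  rcases eq_or_ne c 0 with rfl | hc0
  · simpa using measure_image_le_mul_measure_of_subset_isOpen hN (subset_univ A) isOpen_univ K h
  rw [A.measure_eq_iInf_isOpen μ]
  simp only [ENNReal.mul_iInf_of_ne hc0 hc, le_iInf_iff]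
  exact fun U hAU hU => measure_image_le_mul_measure_of_subset_isOpen hN hAU hU K h

end Vitali
section LayerCake

variable {X Y : Type*} [MeasurableSpace X] [MeasurableSpace Y] {μ : Measure X} {ν : Measure Y}
  {g : X → Y} {J : X → ℝ≥0∞} {B : Set X}

theorem measure_image_eq_zero_of_forall_le_mul [SigmaFinite μ] {A : Set X}
    (h : ∀ A' ⊆ A, ∀ c : ℝ≥0∞, c ≠ 0 → c ≠ ∞ → ν (g '' A') ≤ c * μ A') : ν (g '' A) = 0 := by
  rw [← inter_univ A, ← iUnion_spanningSets μ, inter_iUnion, image_iUnion]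
  refine measure_iUnion_null fun n => le_antisymm ?_ zero_le
  have hT : Tendsto (fun k : ℕ => (k : ℝ≥0∞)⁻¹ * μ (spanningSets μ n)) atTop (𝓝 0) := by
    simpa using ENNReal.Tendsto.mul_const ENNReal.tendsto_inv_nat_nhds_zero
      (Or.inr (measure_spanningSets_lt_top μ n).ne)
  refine ge_of_tendsto hT (eventually_atTop.2 ⟨1, fun k hk => ?_⟩)
  calc ν (g '' (A ∩ spanningSets μ n)) ≤ (k : ℝ≥0∞)⁻¹ * μ (A ∩ spanningSets μ n) :=
        h _ inter_subset_left _ (by simp) (by simpa using (by omega : k ≠ 0))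
  _ ≤ (k : ℝ≥0∞)⁻¹ * μ (spanningSets μ n) := by gcongr; exact inter_subset_right

variable (hJ : Measurable J) (hB : MeasurableSet B)
  (h : ∀ A ⊆ B, ∀ c ≠ ∞, (∀ x ∈ A, J x < c) → ν (g '' A) ≤ c * μ A)
include hJ hB h

theorem measure_image_inter_preimage_Ioo_le_mul_setLIntegral {b : ℝ≥0∞} (hb : 1 < b)
    (hb' : b ≠ ∞) : ν (g '' (B ∩ J ⁻¹' Ioo 0 ∞)) ≤ b * ∫⁻ x in B, J x ∂μ := by
  have hb0 : b ≠ 0 := (zero_lt_one.trans hb).ne'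
  set L : ℤ → Set X := fun m => B ∩ J ⁻¹' Ico (b ^ m) (b ^ (m + 1))
  have hL : B ∩ J ⁻¹' Ioo 0 ∞ ⊆ ⋃ m, L m := by
    rintro x ⟨hxB, hx0, hxt⟩
    obtain ⟨m, hm⟩ := ENNReal.exists_mem_Ico_zpow hx0.ne' hxt.ne hb hb'
    exact mem_iUnion.2 ⟨m, hxB, hm⟩
  have hLm : ∀ m, MeasurableSet (L m) := fun m => hB.inter (hJ measurableSet_Ico)
  have hLd : Pairwise (Disjoint on L) := fun m m' hmm' =>
    ((ENNReal.monotone_zpow hb.le).pairwise_disjoint_on_Ico_succ hmm').preimage J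
      |>.mono inter_subset_right inter_subset_right
  have hlayer : ∀ m, ν (g '' L m) ≤ b * ∫⁻ x in L m, J x ∂μ := fun m => calc
    ν (g '' L m) ≤ b ^ (m + 1) * μ (L m) :=
      h _ inter_subset_left _ (ENNReal.zpow_ne_top hb0 hb' _) fun x hx => hx.2.2
    _ = b * ∫⁻ _ in L m, b ^ m ∂μ := by
      rw [setLIntegral_const, ← mul_assoc, add_comm, ENNReal.zpow_add hb0 hb', zpow_one]
    _ ≤ b * ∫⁻ x in L m, J x ∂μ := by
      gcongr b * ?_
      exact setLIntegral_mono hJ fun x hx => hx.2.1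
  calc ν (g '' (B ∩ J ⁻¹' Ioo 0 ∞)) ≤ ∑' m, ν (g '' L m) := by
        refine (measure_mono (image_mono hL)).trans ?_
        rw [image_iUnion]
        exact measure_iUnion_le _
  _ ≤ ∑' m, b * ∫⁻ x in L m, J x ∂μ := ENNReal.tsum_le_tsum hlayer
  _ = b * ∫⁻ x in ⋃ m, L m, J x ∂μ := by rw [ENNReal.tsum_mul_left, lintegral_iUnion hLm hLd]
  _ ≤ b * ∫⁻ x in B, J x ∂μ := by
        gcongr
        exact iUnion_subset fun m => inter_subset_left

theorem measure_image_le_setLIntegral [SigmaFinite μ] (hN : ∀ E, μ E = 0 → ν (g '' E) = 0) :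
    ν (g '' B) ≤ ∫⁻ x in B, J x ∂μ := by
  by_cases htop : μ (B ∩ J ⁻¹' {∞}) = 0
  swap
  · have : ∫⁻ x in B, J x ∂μ = ∞ := lintegral_eq_top_of_measure_eq_top_ne_zero hJ.aemeasurable
      (by rwa [Measure.restrict_apply' hB, inter_comm])
    simp [this]
  have hzero : ν (g '' (B ∩ J ⁻¹' {0})) = 0 :=
    measure_image_eq_zero_of_forall_le_mul fun A hA c hc0 hc =>
      h A (hA.trans inter_subset_left) c hc fun x hx => (hA hx).2 ▸ pos_iff_ne_zero.2 hc0
  have hcover : B ⊆ (B ∩ J ⁻¹' {0} ∪ B ∩ J ⁻¹' {∞}) ∪ B ∩ J ⁻¹' Ioo 0 ∞ := by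
    intro x hx
    rcases eq_or_ne (J x) 0 with h0 | h0
    · exact Or.inl (Or.inl ⟨hx, h0⟩)
    rcases eq_or_ne (J x) ∞ with ht | ht
    · exact Or.inl (Or.inr ⟨hx, ht⟩)
    exact Or.inr ⟨hx, pos_iff_ne_zero.2 h0, lt_top_iff_ne_top.2 ht⟩
  have hpos : ν (g '' B) ≤ ν (g '' (B ∩ J ⁻¹' Ioo 0 ∞)) := calc
    ν (g '' B) ≤ ν (g '' (B ∩ J ⁻¹' {0} ∪ B ∩ J ⁻¹' {∞})) + ν (g '' (B ∩ J ⁻¹' Ioo 0 ∞)) := by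
      refine (measure_mono (image_mono hcover)).trans ?_
      rw [image_union]
      exact measure_union_le _ _
    _ = ν (g '' (B ∩ J ⁻¹' Ioo 0 ∞)) := by
      rw [image_union, measure_union_null hzero (hN _ htop), zero_add]
  refine ENNReal.le_of_forall_lt_one_mul_le fun a ha => ?_
  rcases eq_or_ne a 0 with rfl | ha0
  · simp
  calc a * ν (g '' B) ≤ a * (a⁻¹ * ∫⁻ x in B, J x ∂μ) := by
        gcongr
        exact hpos.trans (measure_image_inter_preimage_Ioo_le_mul_setLIntegral hJ hB h
          (ENNReal.one_lt_inv.2 ha) (ENNReal.inv_ne_top.2 ha0))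
  _ = ∫⁻ x in B, J x ∂μ := by
        rw [← mul_assoc, ENNReal.mul_inv_cancel ha0 (ha.trans ENNReal.one_lt_top).ne, one_mul]

end LayerCake

section Multiplicity

variable {X Y : Type*}

theorem encard_fiber_le_indicator_image {g : X → Y} {S : Set X} (hS : InjOn g S) (y : Y) :
    (({x ∈ S | g x = y}).encard : ℝ≥0∞) ≤ (g '' S).indicator 1 y := by
  by_cases hy : y ∈ g '' S
  · rw [indicator_of_mem hy, Pi.one_apply, ← ENat.toENNReal_one, ENat.toENNReal_le]
    exact encard_le_one_iff.2 fun a b ha hb => hS ha.1 hb.1 (ha.2.trans hb.2.symm)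
  · have : {x ∈ S | g x = y} = ∅ := eq_empty_of_forall_notMem fun x hx => hy ⟨x, hx⟩
    simp [this, indicator_of_notMem hy]

theorem encard_iUnion_le_tsum {ι : Type*} (s : ι → Set X) :
    ((⋃ i, s i).encard : ℝ≥0∞) ≤ ∑' i, ((s i).encard : ℝ≥0∞) := by
  simpa only [ENNReal.tsum_set_one] using ENNReal.tsum_iUnion_le_tsum (fun _ => (1 : ℝ≥0∞)) s

theorem lintegral_encard_fiber_le_tsum [MeasurableSpace Y] {ν : Measure Y} {g : X → Y}
    {E : Set X} {W : ℕ → Set X} (hW : ∀ n, InjOn g (W n)) (hE : ν (g '' (E \ ⋃ n, W n)) = 0) :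
    ∫⁻ y, (({x ∈ E | g x = y}).encard : ℝ≥0∞) ∂ν ≤ ∑' n, ν (g '' (E ∩ W n)) := by
  have hpt : ∀ᵐ y ∂ν, (({x ∈ E | g x = y}).encard : ℝ≥0∞) ≤
      ∑' n, (toMeasurable ν (g '' (E ∩ W n))).indicator 1 y := by
    filter_upwards [measure_eq_zero_iff_ae_notMem.1 hE] with y hy
    have hsub : {x ∈ E | g x = y} ⊆ ⋃ n, {x ∈ E ∩ W n | g x = y} := by
      rintro x ⟨hxE, rfl⟩
      by_contra hx
      exact hy ⟨x, ⟨hxE, fun hxW => hx (mem_iUnion.2 <|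
        (mem_iUnion.1 hxW).imp fun n hn => ⟨⟨hxE, hn⟩, rfl⟩)⟩, rfl⟩
    calc (({x ∈ E | g x = y}).encard : ℝ≥0∞)
        ≤ ∑' n, (({x ∈ E ∩ W n | g x = y}).encard : ℝ≥0∞) :=
          (ENat.toENNReal_le.2 (encard_mono hsub)).trans (encard_iUnion_le_tsum _)
    _ ≤ ∑' n, (toMeasurable ν (g '' (E ∩ W n))).indicator 1 y := ENNReal.tsum_le_tsum fun n =>
          (encard_fiber_le_indicator_image ((hW n).mono inter_subset_right) y).trans
            (indicator_le_indicator_of_subset (subset_toMeasurable _ _) (fun _ => zero_le) y)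
  calc ∫⁻ y, (({x ∈ E | g x = y}).encard : ℝ≥0∞) ∂ν
      ≤ ∫⁻ y, ∑' n, (toMeasurable ν (g '' (E ∩ W n))).indicator 1 y ∂ν := lintegral_mono_ae hpt
  _ = ∑' n, ν (g '' (E ∩ W n)) := by
      rw [lintegral_tsum fun n =>
        (measurable_one.indicator (measurableSet_toMeasurable _ _)).aemeasurable]
      simp [lintegral_indicator, measurableSet_toMeasurable, measure_toMeasurable]

theorem exists_pairwise_disjoint_injOn_cover [TopologicalSpace X] [SecondCountableTopology X]
    [MeasurableSpace X] [OpensMeasurableSpace X] (g : X → Y) {S : Set X}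
    (h : ∀ x ∈ S, ∃ V, IsOpen V ∧ x ∈ V ∧ InjOn g V) :
    ∃ W : ℕ → Set X, (∀ n, MeasurableSet (W n)) ∧ Pairwise (Disjoint on W) ∧
      (∀ n, InjOn g (W n)) ∧ S ⊆ ⋃ n, W n := by
  set 𝒱 : Set (Set X) := {V | IsOpen V ∧ InjOn g V}
  obtain ⟨T, hT, hT𝒱, hTU⟩ := TopologicalSpace.isOpen_sUnion_countable 𝒱 fun V hV => hV.1
  set V := enumerateCountable hT ∅
  have hV : ∀ n, V n ∈ 𝒱 := fun n =>
    insert_subset (show ∅ ∈ 𝒱 from ⟨isOpen_empty, injOn_empty g⟩) hT𝒱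
      (range_enumerateCountable_subset hT ∅ ⟨n, rfl⟩)
  refine ⟨disjointed V, .disjointed fun n => (hV n).1.measurableSet,
    disjoint_disjointed V, fun n => (hV n).2.mono (disjointed_subset V n), ?_⟩
  rw [iUnion_disjointed]
  intro x hx
  obtain ⟨U, hU, hxU, hinj⟩ := h x hx
  obtain ⟨V', hV'T, hxV'⟩ := mem_sUnion.1 (hTU ▸ mem_sUnion_of_mem hxU ⟨hU, hinj⟩ : x ∈ ⋃₀ T)
  obtain ⟨n, rfl⟩ := subset_range_enumerate hT ∅ hV'T
  exact mem_iUnion.2 ⟨n, hxV'⟩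

end Multiplicity

section DensityPoint

variable {X : Type*} [MetricSpace X] [MeasurableSpace X] [BorelSpace X] {x : X}

theorem ofReal_pi_mul_sq_ne_zero {r : ℝ} (hr : 0 < r) : ENNReal.ofReal (Real.pi * r ^ 2) ≠ 0 :=
  (ENNReal.ofReal_pos.2 (mul_pos Real.pi_pos (pow_pos hr 2))).ne'

theorem IsH2DensityPoint.eventually_measure_closedBall_le (hx : IsH2DensityPoint x) :
    ∀ᶠ r in 𝓝[>] 0, μH[2] (closedBall x r) ≤ 2 * ENNReal.ofReal (Real.pi * r ^ 2) ∧
      ENNReal.ofReal (Real.pi * r ^ 2) ≤ 2 * μH[2] (closedBall x r) := by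
  filter_upwards [self_mem_nhdsWithin, hx.eventually_lt_const ENNReal.one_lt_two,
    hx.eventually_const_lt (ENNReal.inv_lt_one.2 ENNReal.one_lt_two)] with r hr hup hlow
  have hp := ofReal_pi_mul_sq_ne_zero hr
  refine ⟨((ENNReal.div_lt_iff (Or.inl hp) (Or.inl ENNReal.ofReal_ne_top)).1 hup).le, ?_⟩
  rw [← ENNReal.inv_mul_le_iff two_ne_zero ENNReal.ofNat_ne_top]
  exact ((ENNReal.lt_div_iff_mul_lt (Or.inl hp) (Or.inl ENNReal.ofReal_ne_top)).1 hlow).le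

theorem IsH2DensityPoint.eventually_measure_closedBall_three_mul_le (hx : IsH2DensityPoint x) :
    ∀ᶠ r in 𝓝[>] 0, μH[2] (closedBall x (3 * r)) ≤ 36 * μH[2] (closedBall x r) := by
  filter_upwards [hx.eventually_measure_closedBall_le,
    eventually_nhdsGT_zero_mul_left three_pos hx.eventually_measure_closedBall_le]
    with r ⟨_, hlow⟩ ⟨hup, _⟩
  have h9 : ENNReal.ofReal (Real.pi * (3 * r) ^ 2) = 9 * ENNReal.ofReal (Real.pi * r ^ 2) := by
    rw [show Real.pi * (3 * r) ^ 2 = 9 * (Real.pi * r ^ 2) by ring,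
      ENNReal.ofReal_mul (by norm_num), ENNReal.ofReal_ofNat]
  calc μH[2] (closedBall x (3 * r)) ≤ 2 * (9 * ENNReal.ofReal (Real.pi * r ^ 2)) := h9 ▸ hup
  _ ≤ 2 * (9 * (2 * μH[2] (closedBall x r))) := by gcongr
  _ = 36 * μH[2] (closedBall x r) := by ring

theorem IsH2DensityPoint.eventually_volume_image_closedBall_le {f : X → EuclideanSpace ℝ (Fin 2)}
    (hx : IsH2DensityPoint x) {c : ℝ≥0∞} (hc : c ≠ ∞) (hJ : jacobianJ f x < c) :
    ∀ᶠ r in 𝓝[>] 0, volume (f '' closedBall x r) ≤ c * μH[2] (closedBall x r) := by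
  obtain ⟨c', hJc', hc'c⟩ := exists_between hJ
  have hcd := ENNReal.Tendsto.const_mul hx (Or.inr hc)
  rw [mul_one] at hcd
  filter_upwards [self_mem_nhdsWithin, eventually_lt_of_limsup_lt hJc',
    hcd.eventually_const_lt hc'c] with r hr hvol hμ
  have hp := ofReal_pi_mul_sq_ne_zero hr
  rw [← mul_div_assoc] at hμ
  have := (hvol.trans hμ).le
  rwa [ENNReal.div_le_iff hp ENNReal.ofReal_ne_top,
    ENNReal.div_mul_cancel hp ENNReal.ofReal_ne_top] at this

end DensityPoint

theorem volume_image_le_mul_of_jacobianJ_lt {X : Type*} [MetricSpace X] [MeasurableSpace X]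
    [BorelSpace X] [SecondCountableTopology X] [IsLocallyFiniteMeasure (μH[2] : Measure X)]
    {f : X → EuclideanSpace ℝ (Fin 2)} (hN : ∀ E, μH[2] E = 0 → volume (f '' E) = 0)
    {A : Set X} (hA : μH[2] {x ∈ A | ¬ IsH2DensityPoint x} = 0) {c : ℝ≥0∞} (hc : c ≠ ∞)
    (hJ : ∀ x ∈ A, jacobianJ f x < c) : volume (f '' A) ≤ c * μH[2] A := by
  set D := {x ∈ A | IsH2DensityPoint x}
  have hD : volume (f '' D) ≤ c * μH[2] D :=
    measure_image_le_mul_of_frequently hN hc 36 fun x hx =>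
      (hx.2.eventually_measure_closedBall_three_mul_le.and
        (hx.2.eventually_volume_image_closedBall_le hc (hJ x hx.1))).frequently
  have hAD : A ⊆ D ∪ {x ∈ A | ¬ IsH2DensityPoint x} := fun x hx =>
    (em (IsH2DensityPoint x)).imp (⟨hx, ·⟩) (⟨hx, ·⟩)
  calc volume (f '' A) ≤ volume (f '' D) + volume (f '' {x ∈ A | ¬ IsH2DensityPoint x}) :=
        (measure_mono (image_union f _ _ ▸ image_mono hAD)).trans (measure_union_le _ _)
  _ ≤ c * μH[2] A := by
        rw [hN _ hA, add_zero]
        exact hD.trans (by gcongr; exact sep_subset A _)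

theorem volume_image_le_setLIntegral_jacobianJ {X : Type*} [MetricSpace X] [MeasurableSpace X]
    [BorelSpace X] [SecondCountableTopology X] [IsLocallyFiniteMeasure (μH[2] : Measure X)]
    {f : X → EuclideanSpace ℝ (Fin 2)} (hN : ∀ E, μH[2] E = 0 → volume (f '' E) = 0)
    (hJ : Measurable (jacobianJ f)) {B : Set X} (hB : MeasurableSet B)
    (hB' : μH[2] {x ∈ B | ¬ IsH2DensityPoint x} = 0) :
    volume (f '' B) ≤ ∫⁻ x in B, jacobianJ f x ∂μH[2] :=
  measure_image_le_setLIntegral hJ hB (fun _ hAB _ hc hAc => volume_image_le_mul_of_jacobianJ_lt hN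
    (measure_mono_null (inter_subset_inter_left _ hAB) hB') hc hAc) hN

theorem jacobian_area_inequality_reverse_general
    {X : Type*} [MetricSpace X] [MeasurableSpace X] [BorelSpace X]
    (hsurf : ∃ U : Set (EuclideanSpace ℝ (Fin 2)),
      IsOpen U ∧ IsConnected U ∧ Nonempty (X ≃ₜ U))
    (hloc : IsLocallyFiniteMeasure (μH[2] : Measure X))
    (f : X → EuclideanSpace ℝ (Fin 2))
    (hLusin : ∀ E : Set X, μH[2] E = 0 → volume (f '' E) = 0)
    (hJmeas : Measurable (jacobianJ f))
    (C : Set X) (hC : C.Countable)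
    (hinj : ∀ x ∈ Cᶜ, ∃ V : Set X, IsOpen V ∧ x ∈ V ∧ Set.InjOn f V)
    (F : Set X) (hF : MeasurableSet F)
    (hdens : μH[2] {x ∈ F | ¬ IsH2DensityPoint x} = 0) :
    ∫⁻ y, multN f F y ≤ ∫⁻ x in F, jacobianJ f x ∂(μH[2]) := by
  obtain ⟨U, -, -, ⟨e⟩⟩ := hsurf
  have := e.secondCountableTopology
  obtain ⟨W, hWm, hWd, hWinj, hcov⟩ := exists_pairwise_disjoint_injOn_cover f hinj
  have hFW : ∀ n, MeasurableSet (F ∩ W n) := fun n => hF.inter (hWm n)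
  have hrest : F \ ⋃ n, W n ⊆ C := fun x hx => not_not.1 fun hxC => hx.2 (hcov hxC)
  calc ∫⁻ y, multN f F y ≤ ∑' n, volume (f '' (F ∩ W n)) :=
        lintegral_encard_fiber_le_tsum hWinj (((hC.mono hrest).image f).measure_zero _)
  _ ≤ ∑' n, ∫⁻ x in F ∩ W n, jacobianJ f x ∂μH[2] := ENNReal.tsum_le_tsum fun n =>
        volume_image_le_setLIntegral_jacobianJ hLusin hJmeas (hFW n)
          (measure_mono_null (inter_subset_inter_left _ inter_subset_left) hdens)
  _ = ∫⁻ x in ⋃ n, F ∩ W n, jacobianJ f x ∂μH[2] :=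
        (lintegral_iUnion hFW (fun m n hmn => (hWd hmn).mono inter_subset_right
          inter_subset_right) _).symm
  _ ≤ ∫⁻ x in F, jacobianJ f x ∂μH[2] :=
        lintegral_mono_set (iUnion_subset fun _ => inter_subset_left)

/-- Reverse area inequality: if `f : X → ℝ²` is continuous on a metric
surface, satisfies Lusin's condition (N), `J_f` is Borel measurable, `f` is locally
injective outside a countable set `C`, and `F` is a Borel set `H²`-almost every point of
which is an `H²`-density point, then `∫_{ℝ²} N(y, f, F) dy ≤ ∫_F J_f dH²`. -/
theorem jacobian_area_inequality_reverse
    {X : Type*} [MetricSpace X] [MeasurableSpace X] [BorelSpace X]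
    (hsurf : ∃ U : Set (EuclideanSpace ℝ (Fin 2)),
      IsOpen U ∧ IsConnected U ∧ Nonempty (X ≃ₜ U))
    (hloc : IsLocallyFiniteMeasure (μH[2] : Measure X))
    (f : X → EuclideanSpace ℝ (Fin 2)) (hf : Continuous f)
    (hLusin : ∀ E : Set X, μH[2] E = 0 → volume (f '' E) = 0)
    (hJmeas : Measurable (jacobianJ f))
    (C : Set X) (hC : C.Countable)
    (hinj : ∀ x ∈ Cᶜ, ∃ V : Set X, IsOpen V ∧ x ∈ V ∧ Set.InjOn f V)
    (F : Set X) (hF : MeasurableSet F)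
    (hdens : μH[2] {x ∈ F | ¬ IsH2DensityPoint x} = 0) :
    ∫⁻ y, multN f F y ≤ ∫⁻ x in F, jacobianJ f x ∂(μH[2]) :=
  jacobian_area_inequality_reverse_general hsurf hloc f hLusin hJmeas C hC hinj F hF hdens
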